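/- Let p ≥ (ln n)/n. With probability tending to 1 as n → ∞, G ~ G(n,p) satisfies: for every subset U ⊆ V with 1 ≤ |U| ≤ n/(ln² n) and every ε > 0, all but o(n) vertices v ∈ V∖U have at most ε·np/ln n neighbors in U. -/

import Mathlib

/-!
With probability at least `1 - 1/n` every vertex of `G(n,p)` has degree at most `8np`: degree
`m = ⌈8np⌉` at a vertex requires one of `C(n-1, m)` stars to be present, and the union bound gives
`n C(n-1, m) p^m ≤ n e^{-m} ≤ 1/n`, using `m^m / m! ≤ e^m`, `e² < 8` and `np ≥ ln n`.
On that event, double counting the edges between `U` and the set `B` of vertices with more than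
`T = εnp / ln n` neighbours in `U` gives `|B| T ≤ 8np |U|`, hence `|B| ≤ 8n / (ε ln n) ≤ δn`
as soon as `ln n ≥ 8 / (εδ)`.
-/

open MeasureTheory Filter

/-- The Erdős–Rényi random graph measure `G(n,p)`: each potential edge (an element of
`Sym2 (Fin n)`) is present independently with probability `p`. -/
noncomputable def gnp (n : ℕ) (p : ENNReal) (hp : p ≤ 1) :
    Measure (Sym2 (Fin n) → Bool) :=
  Measure.pi fun _ => (PMF.ofFintype (fun b => cond b p (1 - p)) (by simpa using add_tsub_cancel_of_le hp)).toMeasure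

/-- The graph determined by an outcome `ω` of the edge indicators. -/
def graphOf {n : ℕ} (ω : Sym2 (Fin n) → Bool) : SimpleGraph (Fin n) :=
  SimpleGraph.fromEdgeSet {e | ω e = true}


/-- The number of neighbors of `v` inside `U` in the graph `G`. -/
noncomputable def degIn {V : Type*} (G : SimpleGraph V) (v : V) (U : Set V) : ℕ :=
  {u ∈ U | G.Adj v u}.ncard

instance isProbabilityMeasure_gnp (n : ℕ) (p : ENNReal) (hp : p ≤ 1) :
    IsProbabilityMeasure (gnp n p hp) := by
  unfold gnp; infer_instance

lemma graphOf_adj {n : ℕ} (ω : Sym2 (Fin n) → Bool) (v u : Fin n) :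
    (graphOf ω).Adj v u ↔ ω s(v, u) = true ∧ v ≠ u := by
  simp [graphOf, SimpleGraph.fromEdgeSet_adj]

lemma gnp_forall_true {n : ℕ} {p : ENNReal} (hp : p ≤ 1) (S : Finset (Sym2 (Fin n))) :
    gnp n p hp {ω | ∀ e ∈ S, ω e = true} = p ^ S.card := by
  classical
  have hS : {ω : Sym2 (Fin n) → Bool | ∀ e ∈ S, ω e = true}
      = Set.univ.pi fun e => if e ∈ S then {true} else Set.univ := by
    ext ω
    simp only [Set.mem_ofPred_eq, Set.mem_pi, Set.mem_univ, true_implies]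
    refine forall_congr' fun e => ?_
    split_ifs <;> simp [*]
  rw [gnp, hS, Measure.pi_pi]
  simp_rw [apply_ite, measure_univ]
  rw [Finset.prod_ite_mem, Finset.univ_inter, Finset.prod_const]
  congr 1
  simp

lemma gnp_forall_adj {n : ℕ} {p : ENNReal} (hp : p ≤ 1) {v : Fin n} {T : Finset (Fin n)}
    (hv : v ∉ T) : gnp n p hp {ω | ∀ u ∈ T, (graphOf ω).Adj v u} = p ^ T.card := by
  classical
  have hT : {ω | ∀ u ∈ T, (graphOf ω).Adj v u}
      = {ω | ∀ e ∈ T.image (s(v, ·)), ω e = true} := by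
    ext ω
    simp only [Set.mem_ofPred_eq, graphOf_adj, Finset.forall_mem_image]
    exact forall₂_congr fun u hu => and_iff_left (ne_of_mem_of_not_mem hu hv).symm
  rw [hT, gnp_forall_true, Finset.card_image_of_injOn fun a _ b _ h => Sym2.congr_right.mp h]

lemma gnp_le_ncard_neighborSet_le {n : ℕ} {p : ENNReal} (hp : p ≤ 1) (v : Fin n) (m : ℕ) :
    gnp n p hp {ω | m ≤ ((graphOf ω).neighborSet v).ncard} ≤ (n - 1).choose m * p ^ m := by
  classical
  calc gnp n p hp {ω | m ≤ ((graphOf ω).neighborSet v).ncard}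
      ≤ gnp n p hp (⋃ T ∈ (Finset.univ.erase v).powersetCard m,
          {ω | ∀ u ∈ T, (graphOf ω).Adj v u}) := by
        refine measure_mono fun ω hω => ?_
        rw [Set.mem_ofPred_eq, Set.ncard_eq_toFinset_card'] at hω
        obtain ⟨T, hTN, hTm⟩ := Finset.exists_subset_card_eq hω
        have hTadj : ∀ u ∈ T, (graphOf ω).Adj v u := fun u hu => by simpa using hTN hu
        refine Set.mem_biUnion (Finset.mem_powersetCard.mpr ⟨fun u hu => ?_, hTm⟩) hTadj
        exact Finset.mem_erase.mpr ⟨(hTadj u hu).ne', Finset.mem_univ u⟩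
    _ ≤ ∑ T ∈ (Finset.univ.erase v).powersetCard m,
          gnp n p hp {ω | ∀ u ∈ T, (graphOf ω).Adj v u} :=
        measure_biUnion_finset_le _ _
    _ = ∑ _T ∈ (Finset.univ.erase v).powersetCard m, p ^ m :=
        Finset.sum_congr rfl fun T hT => by
          obtain ⟨hTv, hTm⟩ := Finset.mem_powersetCard.mp hT
          rw [gnp_forall_adj hp fun hv => Finset.notMem_erase v _ (hTv hv), hTm]
    _ = (n - 1).choose m * p ^ m := by simp [Finset.card_powersetCard]

lemma gnp_exists_le_ncard_neighborSet_le {n : ℕ} {p : ENNReal} (hp : p ≤ 1) (m : ℕ) :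
    gnp n p hp {ω | ∃ v, m ≤ ((graphOf ω).neighborSet v).ncard}
      ≤ n * ((n - 1).choose m * p ^ m) := by
  calc gnp n p hp {ω | ∃ v, m ≤ ((graphOf ω).neighborSet v).ncard}
      = gnp n p hp (⋃ v, {ω | m ≤ ((graphOf ω).neighborSet v).ncard}) := by
        rw [Set.ofPred_exists]
    _ ≤ ∑ v, gnp n p hp {ω | m ≤ ((graphOf ω).neighborSet v).ncard} :=
        measure_iUnion_fintype_le _ _
    _ ≤ ∑ _v : Fin n, ((n - 1).choose m * p ^ m : ENNReal) :=
        Finset.sum_le_sum fun v _ => gnp_le_ncard_neighborSet_le hp v m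
    _ = n * ((n - 1).choose m * p ^ m) := by simp

open Nat in
lemma choose_mul_pow_le_exp_neg (N m : ℕ) {r : ℝ} (hr : 0 ≤ r)
    (hm : Real.exp 2 * (N * r) ≤ m) : (N.choose m : ℝ) * r ^ m ≤ Real.exp (-m) := by
  have hNr : N * r ≤ m * Real.exp (-2) := by
    rw [Real.exp_neg, ← div_eq_mul_inv, le_div_iff₀ (Real.exp_pos 2)]
    linarith
  calc (N.choose m : ℝ) * r ^ m ≤ N ^ m / m ! * r ^ m := by
        gcongr; exact Nat.choose_le_pow_div m N
    _ = (N * r) ^ m / m ! := by ring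
    _ ≤ (m * Real.exp (-2)) ^ m / m ! := by gcongr
    _ = m ^ m / m ! * Real.exp (m * -2) := by rw [Real.exp_nat_mul]; ring
    _ ≤ Real.exp m * Real.exp (m * -2) := by
        gcongr; exact Real.pow_div_factorial_le_exp _ (Nat.cast_nonneg m) m
    _ = Real.exp (-m) := by rw [← Real.exp_add]; ring_nf

lemma exp_two_lt_eight : Real.exp 2 < 8 := by
  have h := Real.exp_one_lt_d9
  rw [show (2 : ℝ) = 1 + 1 by norm_num, Real.exp_add]
  nlinarith [Real.exp_pos 1]

lemma natCast_mul_choose_mul_pow_le_one_div {n m : ℕ} (hn : 1 ≤ n) {r : ℝ}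
    (hlog : Real.log n ≤ n * r) (hm : 8 * n * r ≤ m) :
    (n : ℝ) * ((n - 1).choose m * r ^ m) ≤ 1 / n := by
  have hn0 : (0 : ℝ) < n := by exact_mod_cast hn
  have hlog0 : 0 ≤ Real.log n := Real.log_nonneg (by exact_mod_cast hn)
  have hr : 0 ≤ r := nonneg_of_mul_nonneg_right (hlog0.trans hlog) hn0
  have hN : Real.exp 2 * (((n - 1 : ℕ) : ℝ) * r) ≤ m := by
    have hn1 : ((n - 1 : ℕ) : ℝ) ≤ n := by exact_mod_cast Nat.sub_le n 1
    calc Real.exp 2 * (((n - 1 : ℕ) : ℝ) * r) ≤ 8 * (n * r) := by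
          gcongr
          exact exp_two_lt_eight.le
      _ ≤ m := by linarith
  calc (n : ℝ) * ((n - 1).choose m * r ^ m) ≤ n * Real.exp (-m) := by
        gcongr; exact choose_mul_pow_le_exp_neg _ _ hr hN
    _ ≤ n * Real.exp (-(2 * Real.log n)) := by gcongr; linarith
    _ = 1 / n := by
        rw [← Real.log_rpow hn0, Real.exp_neg, Real.exp_log (by positivity)]
        field_simp
        norm_cast

lemma gnp_exists_lt_ncard_neighborSet_le {n : ℕ} (hn : 1 ≤ n) {p : ENNReal} (hp : p ≤ 1)
    (hlb : ENNReal.ofReal (Real.log n / n) ≤ p) :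
    gnp n p hp {ω | ∃ v, 8 * n * p.toReal < ((graphOf ω).neighborSet v).ncard}
      ≤ ENNReal.ofReal (1 / n) := by
  have hp_top : p ≠ ⊤ := ne_top_of_le_ne_top ENNReal.one_ne_top hp
  set m := ⌈8 * n * p.toReal⌉₊
  have hlog : Real.log n ≤ n * p.toReal := by
    rw [← div_le_iff₀' (by exact_mod_cast hn)]
    exact (ENNReal.ofReal_le_iff_le_toReal hp_top).mp hlb
  calc gnp n p hp {ω | ∃ v, 8 * n * p.toReal < ((graphOf ω).neighborSet v).ncard}
      ≤ gnp n p hp {ω | ∃ v, m ≤ ((graphOf ω).neighborSet v).ncard} :=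
        measure_mono fun ω ⟨v, hv⟩ => ⟨v, Nat.ceil_le.mpr hv.le⟩
    _ ≤ n * ((n - 1).choose m * p ^ m) := gnp_exists_le_ncard_neighborSet_le hp m
    _ = ENNReal.ofReal (n * ((n - 1).choose m * p.toReal ^ m)) := by
        rw [ENNReal.ofReal_mul (by positivity), ENNReal.ofReal_mul (by positivity),
          ENNReal.ofReal_pow ENNReal.toReal_nonneg, ENNReal.ofReal_natCast,
          ENNReal.ofReal_natCast, ENNReal.ofReal_toReal hp_top]
    _ ≤ ENNReal.ofReal (1 / n) :=
        ENNReal.ofReal_le_ofReal (natCast_mul_choose_mul_pow_le_one_div hn hlog (Nat.le_ceil _))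

lemma ncard_setOf_lt_degIn_mul_le {V : Type*} [Finite V] (G : SimpleGraph V) (U : Set V)
    {D : ℝ} (hD : ∀ v, ((G.neighborSet v).ncard : ℝ) ≤ D) (T : ℝ) :
    ({v | T < (degIn G v U : ℝ)}.ncard : ℝ) * T ≤ U.ncard * D := by
  classical
  have := Fintype.ofFinite V
  set B := {v | T < (degIn G v U : ℝ)}.toFinset
  have hdeg : ∀ v, degIn G v U = (U.toFinset.bipartiteAbove G.Adj v).card := by
    intro v
    rw [degIn, ← Set.ncard_coe_finset, Finset.coe_bipartiteAbove]
    simp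
  have hbelow : ∀ u, ((B.bipartiteBelow G.Adj u).card : ℝ) ≤ D := fun u =>
    calc ((B.bipartiteBelow G.Adj u).card : ℝ) = (B.bipartiteBelow G.Adj u : Set V).ncard := by
          rw [Set.ncard_coe_finset]
      _ ≤ (G.neighborSet u).ncard := by
          exact_mod_cast Set.ncard_le_ncard
            fun v hv => ((Finset.mem_bipartiteBelow G.Adj).mp hv).2.symm
      _ ≤ D := hD u
  have h := Finset.card_nsmul_le_card_nsmul (R := ℝ) G.Adj (s := B) (t := U.toFinset)
    (fun v hv => by rw [← hdeg]; exact le_of_lt (by simpa [B] using hv)) (fun u _ => hbelow u)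
  simpa only [nsmul_eq_mul, Set.ncard_eq_toFinset_card'] using h

lemma ncard_high_attachment_le {n : ℕ} (G : SimpleGraph (Fin n)) {r ε δ : ℝ}
    (hr : Real.log n / n ≤ r)
    (hε : 0 < ε) (hδ : 0 < δ) (hlog : 8 / (ε * δ) ≤ Real.log n)
    (hD : ∀ v, ((G.neighborSet v).ncard : ℝ) ≤ 8 * n * r)
    (U : Set (Fin n)) (hU : (U.ncard : ℝ) ≤ n / Real.log n ^ 2) :
    ({v | v ∉ U ∧ ε * n * r / Real.log n < (degIn G v U : ℝ)}.ncard : ℝ) ≤ δ * n := by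
  have hlog0 : 0 < Real.log n := lt_of_lt_of_le (by positivity) hlog
  have hn : (0 : ℝ) < n := Nat.cast_pos.mpr (Nat.pos_of_ne_zero fun h => by simp [h] at hlog0)
  have hr0 : 0 < r := lt_of_lt_of_le (by positivity) hr
  set T := ε * n * r / Real.log n
  have hT : 0 < T := by positivity
  have hsub : ({v | v ∉ U ∧ T < (degIn G v U : ℝ)}.ncard : ℝ)
      ≤ {v | T < (degIn G v U : ℝ)}.ncard := by
    exact_mod_cast Set.ncard_le_ncard fun v (hv : v ∉ U ∧ _) => hv.2
  refine le_trans hsub (le_of_mul_le_mul_right ?_ hT)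
  calc ({v | T < (degIn G v U : ℝ)}.ncard : ℝ) * T ≤ U.ncard * (8 * n * r) :=
        ncard_setOf_lt_degIn_mul_le G U hD T
    _ ≤ n / Real.log n ^ 2 * (8 * n * r) := by gcongr
    _ = 8 / (ε * δ) / Real.log n * (δ * n * T) := by simp only [T]; field_simp
    _ ≤ δ * n * T := mul_le_of_le_one_left (by positivity) (div_le_one_of_le₀ hlog hlog0.le)

lemma tendsto_measure_nhds_one_of_compl_subset {ι : Type*} {l : Filter ι} {Ω : ι → Type*}
    [∀ i, MeasurableSpace (Ω i)] (μ : ∀ i, Measure (Ω i)) [∀ i, IsProbabilityMeasure (μ i)]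
    {B E : ∀ i, Set (Ω i)} (hB : ∀ i, MeasurableSet (B i)) (hBE : ∀ᶠ i in l, (B i)ᶜ ⊆ E i)
    (hB0 : Tendsto (fun i => μ i (B i)) l (nhds 0)) :
    Tendsto (fun i => μ i (E i)) l (nhds 1) := by
  have hcompl : Tendsto (fun i => 1 - μ i (B i)) l (nhds 1) := by
    simpa using ENNReal.Tendsto.sub tendsto_const_nhds hB0 (Or.inl ENNReal.one_ne_top)
  refine tendsto_of_tendsto_of_tendsto_of_le_of_le' hcompl tendsto_const_nhds ?_
    (Eventually.of_forall fun i => prob_le_one)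
  filter_upwards [hBE] with i hi
  rw [← prob_compl_eq_one_sub (hB i)]
  exact measure_mono hi

/-- P9. Let `p ≥ (ln n)/n`. Then w.h.p. `G ~ G(n,p)` is such that
for every `U` with `1 ≤ |U| ≤ n/ln² n` and every `ε > 0`, all but `o(n)` vertices
`v ∈ V∖U` satisfy `d(v,U) ≤ ε np / ln n`; formalized: for every `ε, δ > 0`, w.h.p.
for every such `U` at most `δ n` vertices `v ∉ U` have more than `ε np / ln n`
neighbors in `U`. -/
theorem gnp_few_high_attachment (p : ℕ → ENNReal) (hp : ∀ n, p n ≤ 1)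
    (hlb : ∀ n : ℕ, ENNReal.ofReal (Real.log n / n) ≤ p n)
    (ε δ : ℝ) (hε : 0 < ε) (hδ : 0 < δ) :
    Tendsto
      (fun n => gnp n (p n) (hp n)
        {ω | ∀ U : Set (Fin n),
          1 ≤ U.ncard → (U.ncard : ℝ) ≤ n / (Real.log n) ^ 2 →
          (({v | v ∉ U ∧
              ε * n * (p n).toReal / Real.log n < (degIn (graphOf ω) v U : ℝ)}.ncard : ℝ))
            ≤ δ * n})
      atTop (nhds 1) := by
  refine tendsto_measure_nhds_one_of_compl_subset (fun n => gnp n (p n) (hp n))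
    (B := fun n => {ω | ∃ v, 8 * n * (p n).toReal < ((graphOf ω).neighborSet v).ncard})
    (fun _ => .of_discrete) ?_ ?_
  · have hlog := (Real.tendsto_log_atTop.comp tendsto_natCast_atTop_atTop).eventually_ge_atTop
      (8 / (ε * δ))
    filter_upwards [hlog] with n hn ω hω U _ hU
    have hr := (ENNReal.ofReal_le_iff_le_toReal (ne_top_of_le_ne_top ENNReal.one_ne_top (hp n))).mp
      (hlb n)
    simp only [Set.mem_compl_iff, Set.mem_ofPred_eq, not_exists, not_lt] at hω
    exact ncard_high_attachment_le (graphOf ω) hr hε hδ hn hω U hU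
  · have h1n : Tendsto (fun n : ℕ => ENNReal.ofReal (1 / n)) atTop (nhds 0) := by
      simpa using ENNReal.tendsto_ofReal tendsto_one_div_atTop_nhds_zero_nat
    refine tendsto_of_tendsto_of_tendsto_of_le_of_le' tendsto_const_nhds h1n
      (Eventually.of_forall fun _ => zero_le) ?_
    filter_upwards [eventually_ge_atTop 1] with n hn
      using gnp_exists_lt_ncard_neighborSet_le hn (hp n) (hlb n)
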